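/- For any real matrices M (of size m × p) and N (of size m × q), the nuclear norm of the column-wise concatenation [M, N] is at most the sum of the nuclear norms of M and N: ‖[M, N]‖_* ≤ ‖M‖_* + ‖N‖_*. -/

import Mathlib

/-!
Nuclear-norm duality: `‖A‖_* = max tr (Uᵀ A)` over contractions `U`. For a contraction `W`,
expanding `tr (Wᵀ M)` in an orthonormal eigenbasis `vⱼ` of `Mᵀ M` and applying Cauchy–Schwarz gives
`tr (Wᵀ M) ≤ ∑ ‖M vⱼ‖ = ‖M‖_*`, and `U = A (AᵀA)^(-1/2)` (with a pseudo-inverse) attains equality.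
For `A = [M, N]` the optimal `U = [U₁, U₂]` has contractions as blocks and
`tr (Uᵀ A) = tr (U₁ᵀ M) + tr (U₂ᵀ N) ≤ ‖M‖_* + ‖N‖_*`.
-/

/-- The nuclear norm of a real matrix `A`: the sum of its singular values, i.e. the sum of the
square roots of the eigenvalues of the positive semidefinite symmetric matrix `Aᵀ * A`. -/
noncomputable def nuclearNorm {m n : Type*} [Fintype m] [Fintype n] [DecidableEq n]
    (A : Matrix m n ℝ) : ℝ :=
  ∑ i, Real.sqrt ((show (Matrix.transpose A * A).IsHermitian by
    simpa using Matrix.isHermitian_conjTranspose_mul_self A).eigenvalues i)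

namespace Matrix

variable {m n : Type*} [Fintype m]

theorem isHermitian_transpose_mul_self (A : Matrix m n ℝ) : (Aᵀ * A).IsHermitian := by
  simpa using isHermitian_conjTranspose_mul_self A

variable [Fintype n]

def IsContraction (W : Matrix m n ℝ) : Prop :=
  ∀ v : n → ℝ, (W *ᵥ v) ⬝ᵥ (W *ᵥ v) ≤ v ⬝ᵥ v

theorem dotProduct_le_sqrt_mul_sqrt (x y : n → ℝ) : x ⬝ᵥ y ≤ √(x ⬝ᵥ x) * √(y ⬝ᵥ y) := by
  simpa only [dotProduct, sq] using Real.sum_mul_le_sqrt_mul_sqrt Finset.univ x y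

theorem mulVec_dotProduct_mulVec (B : Matrix m n ℝ) (x y : n → ℝ) :
    (B *ᵥ x) ⬝ᵥ (B *ᵥ y) = x ⬝ᵥ ((Bᵀ * B) *ᵥ y) := by
  rw [← mulVec_mulVec, dotProduct_mulVec x Bᵀ, vecMul_transpose]

variable [DecidableEq n]

section Orthogonal

variable {V : Matrix n n ℝ}

theorem trace_transpose_mul_eq_sum_mulVec_dotProduct_mulVec (hV : V * Vᵀ = 1)
    (W M : Matrix m n ℝ) : (Wᵀ * M).trace = ∑ j, (W *ᵥ Vᵀ j) ⬝ᵥ (M *ᵥ Vᵀ j) := by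
  calc (Wᵀ * M).trace = (Wᵀ * M * (V * Vᵀ)).trace := by rw [hV, Matrix.mul_one]
    _ = ((W * V)ᵀ * (M * V)).trace := by
        rw [transpose_mul, ← Matrix.mul_assoc, trace_mul_comm]
        simp only [Matrix.mul_assoc]
    _ = ∑ j, (W *ᵥ Vᵀ j) ⬝ᵥ (M *ᵥ Vᵀ j) := rfl

theorem trace_mul_diagonal_mul_transpose (hV : Vᵀ * V = 1) (d : n → ℝ) :
    (V * diagonal d * Vᵀ).trace = ∑ j, d j := by
  rw [trace_mul_comm, ← Matrix.mul_assoc, hV, Matrix.one_mul, trace_diagonal]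

theorem mul_diagonal_mul_transpose_mul (hV : Vᵀ * V = 1) (d d' : n → ℝ) :
    V * diagonal d * Vᵀ * (V * diagonal d' * Vᵀ) = V * diagonal (d * d') * Vᵀ := by
  simp only [Matrix.mul_assoc]
  rw [← Matrix.mul_assoc Vᵀ, hV, Matrix.one_mul, ← Matrix.mul_assoc (diagonal d),
    diagonal_mul_diagonal']
  rfl

theorem dotProduct_mul_diagonal_mul_transpose_mulVec_le (hV : V * Vᵀ = 1) {d : n → ℝ}
    (hd : ∀ j, d j ≤ 1) (x : n → ℝ) : x ⬝ᵥ ((V * diagonal d * Vᵀ) *ᵥ x) ≤ x ⬝ᵥ x := by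
  set y := Vᵀ *ᵥ x
  calc x ⬝ᵥ ((V * diagonal d * Vᵀ) *ᵥ x) = y ⬝ᵥ (diagonal d *ᵥ y) := by
        rw [← mulVec_mulVec, ← mulVec_mulVec, dotProduct_mulVec, ← mulVec_transpose]
    _ ≤ y ⬝ᵥ y := by
        simp only [dotProduct, mulVec_diagonal]
        exact Finset.sum_le_sum fun j _ => by nlinarith [hd j, mul_self_nonneg (y j)]
    _ = x ⬝ᵥ x := by
        rw [mulVec_dotProduct_mulVec, transpose_transpose, hV, one_mulVec]

end Orthogonal

section Spectral

variable {S : Matrix n n ℝ} (hS : S.IsHermitian)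

theorem IsHermitian.eigenvectorUnitary_mul_transpose :
    (hS.eigenvectorUnitary : Matrix n n ℝ) * (hS.eigenvectorUnitary : Matrix n n ℝ)ᵀ = 1 := by
  simpa [star_eq_conjTranspose] using Unitary.coe_mul_star_self hS.eigenvectorUnitary

theorem IsHermitian.transpose_mul_eigenvectorUnitary :
    (hS.eigenvectorUnitary : Matrix n n ℝ)ᵀ * hS.eigenvectorUnitary = 1 := by
  simpa [star_eq_conjTranspose] using Unitary.coe_star_mul_self hS.eigenvectorUnitary

theorem IsHermitian.eq_eigenvectorUnitary_mul_diagonal_mul_transpose :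
    S = hS.eigenvectorUnitary * diagonal hS.eigenvalues *
      (hS.eigenvectorUnitary : Matrix n n ℝ)ᵀ := by
  conv_lhs => rw [hS.spectral_theorem]
  simp [Unitary.conjStarAlgAut_apply, star_eq_conjTranspose]

theorem IsHermitian.eigenvectorBasis_dotProduct_self (j : n) :
    ⇑(hS.eigenvectorBasis j) ⬝ᵥ ⇑(hS.eigenvectorBasis j) = 1 := by
  simpa [mul_apply, dotProduct] using congrFun (congrFun hS.transpose_mul_eigenvectorUnitary j) j

end Spectral

theorem nuclearNorm_eq_sum_sqrt_eigenvalues {A : Matrix m n ℝ} (hA : (Aᵀ * A).IsHermitian) :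
    nuclearNorm A = ∑ j, √(hA.eigenvalues j) :=
  rfl

theorem mulVec_eigenvectorBasis_dotProduct_self {A : Matrix m n ℝ}
    (hA : (Aᵀ * A).IsHermitian) (j : n) :
    (A *ᵥ hA.eigenvectorBasis j) ⬝ᵥ (A *ᵥ hA.eigenvectorBasis j) = hA.eigenvalues j := by
  rw [mulVec_dotProduct_mulVec, hA.mulVec_eigenvectorBasis, dotProduct_smul,
    hA.eigenvectorBasis_dotProduct_self, smul_eq_mul, mul_one]

theorem IsContraction.trace_transpose_mul_le_nuclearNorm {W : Matrix m n ℝ}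
    (hW : IsContraction W) (M : Matrix m n ℝ) : (Wᵀ * M).trace ≤ nuclearNorm M := by
  set hM := isHermitian_transpose_mul_self M
  rw [trace_transpose_mul_eq_sum_mulVec_dotProduct_mulVec hM.eigenvectorUnitary_mul_transpose,
    nuclearNorm_eq_sum_sqrt_eigenvalues hM]
  refine Finset.sum_le_sum fun j _ => ?_
  set v := ⇑(hM.eigenvectorBasis j)
  have hWv : √((W *ᵥ v) ⬝ᵥ (W *ᵥ v)) ≤ 1 :=
    Real.sqrt_le_one.mpr ((hW v).trans_eq (hM.eigenvectorBasis_dotProduct_self j))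
  calc (W *ᵥ v) ⬝ᵥ (M *ᵥ v) ≤ √((W *ᵥ v) ⬝ᵥ (W *ᵥ v)) * √((M *ᵥ v) ⬝ᵥ (M *ᵥ v)) :=
        dotProduct_le_sqrt_mul_sqrt _ _
    _ ≤ √(hM.eigenvalues j) := by
        rw [mulVec_eigenvectorBasis_dotProduct_self]
        exact mul_le_of_le_one_left (Real.sqrt_nonneg _) hWv

theorem exists_isContraction_trace_transpose_mul_eq_nuclearNorm (A : Matrix m n ℝ) :
    ∃ U : Matrix m n ℝ, IsContraction U ∧ (Uᵀ * A).trace = nuclearNorm A := by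
  set hA := isHermitian_transpose_mul_self A
  set V : Matrix n n ℝ := ↑hA.eigenvectorUnitary
  have hV : Vᵀ * V = 1 := hA.transpose_mul_eigenvectorUnitary
  -- `0⁻¹ = 0` makes `e` the pseudo-inverse of `√λ`: no case split on `λⱼ = 0` is needed.
  set e : n → ℝ := fun j => (√(hA.eigenvalues j))⁻¹
  have he : ∀ j, e j * hA.eigenvalues j = √(hA.eigenvalues j) := fun j => by
    rw [inv_mul_eq_div, Real.div_sqrt]
  set P := V * diagonal e * Vᵀ
  have hPG : Pᵀ * (Aᵀ * A) = V * diagonal (e * hA.eigenvalues) * Vᵀ := by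
    rw [show Pᵀ = P by simp [P, transpose_mul, Matrix.mul_assoc]]
    exact (congrArg (P * ·) hA.eq_eigenvectorUnitary_mul_diagonal_mul_transpose).trans
      (mul_diagonal_mul_transpose_mul hV _ _)
  refine ⟨A * P, fun x => ?_, ?_⟩
  · rw [mulVec_dotProduct_mulVec, transpose_mul, Matrix.mul_assoc, ← Matrix.mul_assoc Aᵀ,
      ← Matrix.mul_assoc Pᵀ, hPG, mul_diagonal_mul_transpose_mul hV]
    refine dotProduct_mul_diagonal_mul_transpose_mulVec_le hA.eigenvectorUnitary_mul_transpose
      (fun j => ?_) x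
    simp only [Pi.mul_apply, he]
    exact mul_inv_le_one
  · rw [transpose_mul, Matrix.mul_assoc, hPG, trace_mul_diagonal_mul_transpose hV]
    exact Finset.sum_congr rfl fun j _ => he j

section Blocks

variable {p q : Type*} [Fintype p] [Fintype q]

theorem IsContraction.of_fromCols_left {U₁ : Matrix m p ℝ} {U₂ : Matrix m q ℝ}
    (h : IsContraction (fromCols U₁ U₂)) : IsContraction U₁ := fun x => by
  simpa [fromCols_mulVec_sumElim, sumElim_dotProduct_sumElim] using h (Sum.elim x 0)

theorem IsContraction.of_fromCols_right {U₁ : Matrix m p ℝ} {U₂ : Matrix m q ℝ}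
    (h : IsContraction (fromCols U₁ U₂)) : IsContraction U₂ := fun x => by
  simpa [fromCols_mulVec_sumElim, sumElim_dotProduct_sumElim] using h (Sum.elim 0 x)

theorem trace_transpose_fromCols_mul_fromCols (U₁ M : Matrix m p ℝ) (U₂ N : Matrix m q ℝ) :
    ((fromCols U₁ U₂)ᵀ * fromCols M N).trace = (U₁ᵀ * M).trace + (U₂ᵀ * N).trace := by
  simp [trace, Fintype.sum_sum_type, transpose_fromCols]

end Blocks

end Matrix

open Matrix in
/-- The nuclear norm of the column-wise concatenation `[M, N]` is at most the sum of the
nuclear norms of `M` and `N`. -/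
theorem nuclearNorm_fromColumns_le {m p q : Type*} [Fintype m] [Fintype p] [Fintype q]
    [DecidableEq p] [DecidableEq q] (M : Matrix m p ℝ) (N : Matrix m q ℝ) :
    nuclearNorm (Matrix.fromCols M N) ≤ nuclearNorm M + nuclearNorm N := by
  obtain ⟨U, hU, hUA⟩ := exists_isContraction_trace_transpose_mul_eq_nuclearNorm (fromCols M N)
  rw [← fromCols_toCols U] at hU hUA
  rw [← hUA, trace_transpose_fromCols_mul_fromCols]
  exact add_le_add (hU.of_fromCols_left.trace_transpose_mul_le_nuclearNorm M)
    (hU.of_fromCols_right.trace_transpose_mul_le_nuclearNorm N)
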